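/- Let R be a (possibly noncommutative) ring and let a, w, w', c ∈ R. Suppose a is a unit with inverse r, and a - w'*c*w is a unit with inverse ρ. Then (1 - c*w*r*w') * (1 + c*w*ρ*w') = 1 and (1 + c*w*ρ*w') * (1 - c*w*r*w') = 1; in particular 1 - c*w*r*w' is a unit with inverse 1 + c*w*ρ*w'. -/
import Mathlib

/-- Algebraic identity used in the proof of the Birman–Schwinger principle
(Proposition 2.3 of the paper): if `a` is a unit with inverse `r` and
`a - w'*c*w` is a unit with inverse `ρ`, then
`(1 - c*w*r*w') * (1 + c*w*ρ*w') = 1` and `(1 + c*w*ρ*w') * (1 - c*w*r*w') = 1`;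
in particular `1 - c*w*r*w'` is a unit. -/
theorem birman_schwinger_resolvent_identity {R : Type*} [Ring R]
    (a w w' c r ρ : R) (har : a * r = 1) (hra : r * a = 1)
    (hρ : (a - w' * c * w) * ρ = 1) (hρ' : ρ * (a - w' * c * w) = 1) :
    (1 - c * w * r * w') * (1 + c * w * ρ * w') = 1 ∧
    (1 + c * w * ρ * w') * (1 - c * w * r * w') = 1 ∧
    IsUnit (1 - c * w * r * w') := by
  have key1 : r * (w' * c * w) * ρ = ρ - r := by
    have : r * ((a - w' * c * w) * ρ) = r := by rw [hρ, mul_one]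
    calc r * (w' * c * w) * ρ = r * (a * ρ) - r * ((a - w' * c * w) * ρ) := by
          rw [← mul_assoc]; noncomm_ring
      _ = ρ - r := by rw [← mul_assoc, hra, one_mul, this]
  have key2 : ρ * (w' * c * w) * r = ρ - r := by
    have : (ρ * (a - w' * c * w)) * r = r := by rw [hρ', one_mul]
    calc ρ * (w' * c * w) * r = (ρ * a) * r - (ρ * (a - w' * c * w)) * r := by noncomm_ring
      _ = ρ - r := by rw [mul_assoc, har, mul_one, this]
  have h1 : (1 - c * w * r * w') * (1 + c * w * ρ * w') = 1 := by
    have : c * w * (r * (w' * c * w) * ρ) * w' = c * w * (ρ - r) * w' := by rw [key1]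
    calc (1 - c * w * r * w') * (1 + c * w * ρ * w')
        = 1 + c * w * ρ * w' - c * w * r * w' - c * w * (r * (w' * c * w) * ρ) * w' := by
          noncomm_ring
      _ = 1 + c * w * ρ * w' - c * w * r * w' - c * w * (ρ - r) * w' := by rw [this]
      _ = 1 := by noncomm_ring
  have h2 : (1 + c * w * ρ * w') * (1 - c * w * r * w') = 1 := by
    have : c * w * (ρ * (w' * c * w) * r) * w' = c * w * (ρ - r) * w' := by rw [key2]
    calc (1 + c * w * ρ * w') * (1 - c * w * r * w')
        = 1 + c * w * ρ * w' - c * w * r * w' - c * w * (ρ * (w' * c * w) * r) * w' := by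
          noncomm_ring
      _ = 1 + c * w * ρ * w' - c * w * r * w' - c * w * (ρ - r) * w' := by rw [this]
      _ = 1 := by noncomm_ring
  exact ⟨h1, h2, ⟨⟨_, _, h1, h2⟩, rfl⟩⟩
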